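/- arXiv:2312.07268 — 2 statements merged into one kernel-verified Lean document; each statement's English description precedes it below -/
import Mathlib

section
/- For all twice continuously differentiable functions u, v on the space-time cylinder Q = Ω × (0,T) ⊂ ℝ^d × ℝ, with the multiplier Mu := -ξ x·∇u + β(t - T*)∂_t u and wave operator Wu := ∂_tt u - c²Δu, the pointwise identity holds: (Mu)(Wv) + (Wu)(Mv) = ∂_t[ Mu ∂_t v + ∂_t u Mv - β(t-T*)(∂_t u ∂_t v - c²∇u·∇v) ] - div[ c² Mu ∇v + c² Mv ∇u - ξ x (∂_t u ∂_t v - c²∇u·∇v) ] - (β + ξd) ∂_t u ∂_t v - c²(β + ξ(2-d)) ∇u·∇v. -/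
open MeasureTheory Set
open scoped RealInnerProductSpace

noncomputable section

/-- Spatial gradient of `u(·,t)` at `x`. -/
def sgrad {d : ℕ} (u : EuclideanSpace ℝ (Fin d) → ℝ → ℝ)
    (x : EuclideanSpace ℝ (Fin d)) (t : ℝ) : EuclideanSpace ℝ (Fin d) :=
  gradient (fun y => u y t) x

/-- Time derivative `∂ₜu`. -/
def tderiv {d : ℕ} (u : EuclideanSpace ℝ (Fin d) → ℝ → ℝ)
    (x : EuclideanSpace ℝ (Fin d)) (t : ℝ) : ℝ :=
  deriv (fun s => u x s) t

/-- Spatial divergence of a vector field. -/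
def sdiv {d : ℕ} (F : EuclideanSpace ℝ (Fin d) → EuclideanSpace ℝ (Fin d))
    (x : EuclideanSpace ℝ (Fin d)) : ℝ :=
  ∑ i, fderiv ℝ (fun y => F y i) x (EuclideanSpace.single i 1)

/-- Spatial Laplacian. -/
def slap {d : ℕ} (f : EuclideanSpace ℝ (Fin d) → ℝ)
    (x : EuclideanSpace ℝ (Fin d)) : ℝ :=
  sdiv (fun y => gradient f y) x

/-- The wave operator `Wu = ∂ₜₜu - c²Δu`. -/
def Wop {d : ℕ} (c : ℝ) (u : EuclideanSpace ℝ (Fin d) → ℝ → ℝ)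
    (x : EuclideanSpace ℝ (Fin d)) (t : ℝ) : ℝ :=
  deriv (fun s => tderiv u x s) t - c ^ 2 * slap (fun y => u y t) x

/-- The space–time Morawetz multiplier `Mu = -ξ x·∇u + β(t-T*)∂ₜu`. -/
def Mop {d : ℕ} (ξ β Tstar : ℝ) (u : EuclideanSpace ℝ (Fin d) → ℝ → ℝ)
    (x : EuclideanSpace ℝ (Fin d)) (t : ℝ) : ℝ :=
  -ξ * ⟪x, sgrad u x t⟫ + β * (t - Tstar) * tderiv u x t

end


noncomputable section MorawetzAux

/-- spatial direction vectors in the product space -/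
def mes {d : ℕ} (i : Fin d) : (EuclideanSpace ℝ (Fin d)) × ℝ := (EuclideanSpace.single i 1, (0:ℝ))
/-- time direction vector in the product space -/
def met {d : ℕ} : (EuclideanSpace ℝ (Fin d)) × ℝ := ((0 : EuclideanSpace ℝ (Fin d)), (1:ℝ))

variable {d : ℕ} {U : (EuclideanSpace ℝ (Fin d)) × ℝ → ℝ} {x : EuclideanSpace ℝ (Fin d)} {t : ℝ}

theorem hasDerivAt_time (h : DifferentiableAt ℝ U (x, t)) :
    HasDerivAt (fun s => U (x, s)) (fderiv ℝ U (x, t) met) t := by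
  have h1 : HasDerivAt (fun s : ℝ => ((x : EuclideanSpace ℝ (Fin d)), s)) met t :=
    (hasDerivAt_const t x).prodMk (hasDerivAt_id t)
  exact h.hasFDerivAt.comp_hasDerivAt t h1

theorem hasFDerivAt_space (h : DifferentiableAt ℝ U (x, t)) :
    HasFDerivAt (fun y => U (y, t))
      ((fderiv ℝ U (x, t)).comp ((ContinuousLinearMap.id ℝ (EuclideanSpace ℝ (Fin d))).prod 0)) x := by
  have h1 : HasFDerivAt (fun y : EuclideanSpace ℝ (Fin d) => (y, t))
      ((ContinuousLinearMap.id ℝ (EuclideanSpace ℝ (Fin d))).prod 0) x :=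
    (hasFDerivAt_id x).prodMk (hasFDerivAt_const t x)
  exact h.hasFDerivAt.comp x h1

variable {B : ((EuclideanSpace ℝ (Fin d)) × ℝ) →L[ℝ] ((EuclideanSpace ℝ (Fin d)) × ℝ) →L[ℝ] ℝ}

theorem hasDerivAt_time₂ (hB : HasFDerivAt (fderiv ℝ U) B (x, t)) (w : (EuclideanSpace ℝ (Fin d)) × ℝ) :
    HasDerivAt (fun s => fderiv ℝ U (x, s) w) (B met w) t := by
  have h1 : HasDerivAt (fun s : ℝ => ((x : EuclideanSpace ℝ (Fin d)), s)) met t :=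
    (hasDerivAt_const t x).prodMk (hasDerivAt_id t)
  have h2 : HasDerivAt (fun s => fderiv ℝ U (x, s)) (B met) t :=
    hB.comp_hasDerivAt t h1
  exact (ContinuousLinearMap.apply ℝ ℝ w).hasFDerivAt.comp_hasDerivAt t h2

theorem hasFDerivAt_space₂ (hB : HasFDerivAt (fderiv ℝ U) B (x, t)) (w : (EuclideanSpace ℝ (Fin d)) × ℝ) :
    HasFDerivAt (fun y => fderiv ℝ U (y, t) w)
      (((ContinuousLinearMap.apply ℝ ℝ w).comp B).comp
        ((ContinuousLinearMap.id ℝ (EuclideanSpace ℝ (Fin d))).prod 0)) x := by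
  have h1 : HasFDerivAt (fun y : EuclideanSpace ℝ (Fin d) => (y, t))
      ((ContinuousLinearMap.id ℝ (EuclideanSpace ℝ (Fin d))).prod 0) x :=
    (hasFDerivAt_id x).prodMk (hasFDerivAt_const t x)
  exact ((ContinuousLinearMap.apply ℝ ℝ w).hasFDerivAt.comp (x, t) hB).comp x h1

theorem space₂_apply (w : (EuclideanSpace ℝ (Fin d)) × ℝ) (i : Fin d) :
    (((ContinuousLinearMap.apply ℝ ℝ w).comp B).comp
        ((ContinuousLinearMap.id ℝ (EuclideanSpace ℝ (Fin d))).prod 0)) (EuclideanSpace.single i 1)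
      = B (mes i) w := rfl

theorem hasFDerivAt_coord (i : Fin d) :
    HasFDerivAt (fun y : EuclideanSpace ℝ (Fin d) => y i) (EuclideanSpace.proj (𝕜 := ℝ) i) x :=
  (EuclideanSpace.proj (𝕜 := ℝ) i).hasFDerivAt.congr_of_eventuallyEq
    (Filter.Eventually.of_forall fun _ => rfl)

theorem inner_eq_sum (a w : EuclideanSpace ℝ (Fin d)) : ⟪a, w⟫ = ∑ i, a i * w i := by
  simp [PiLp.inner_apply, RCLike.inner_apply, conj_trivial]
  exact Finset.sum_congr rfl fun i _ => mul_comm _ _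

end MorawetzAux

set_option maxHeartbeats 2000000 in
/-- the pointwise Morawetz identity for the wave equation. -/
theorem pointwise_morawetz_identity
    {d : ℕ} (hd : 1 ≤ d) (Ω : Set (EuclideanSpace ℝ (Fin d))) (hΩ : IsOpen Ω)
    (T : ℝ) (hT : 0 < T) (c : ℝ) (hc : 0 < c) (ξ β Tstar : ℝ)
    (u v : EuclideanSpace ℝ (Fin d) → ℝ → ℝ)
    (hu : ContDiffOn ℝ 2 (fun p : EuclideanSpace ℝ (Fin d) × ℝ => u p.1 p.2)
      (Ω ×ˢ Ioo (0:ℝ) T))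
    (hv : ContDiffOn ℝ 2 (fun p : EuclideanSpace ℝ (Fin d) × ℝ => v p.1 p.2)
      (Ω ×ˢ Ioo (0:ℝ) T)) :
    ∀ x ∈ Ω, ∀ t ∈ Ioo (0:ℝ) T,
      Mop ξ β Tstar u x t * Wop c v x t + Wop c u x t * Mop ξ β Tstar v x t
        = deriv (fun s =>
              Mop ξ β Tstar u x s * tderiv v x s + tderiv u x s * Mop ξ β Tstar v x s
                - β * (s - Tstar) *
                  (tderiv u x s * tderiv v x s - c ^ 2 * ⟪sgrad u x s, sgrad v x s⟫)) t
          - sdiv (fun y =>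
              (c ^ 2 * Mop ξ β Tstar u y t) • sgrad v y t
                + (c ^ 2 * Mop ξ β Tstar v y t) • sgrad u y t
                - (ξ * (tderiv u y t * tderiv v y t
                    - c ^ 2 * ⟪sgrad u y t, sgrad v y t⟫)) • y) x
          - (β + ξ * d) * (tderiv u x t * tderiv v x t)
          - c ^ 2 * (β + ξ * (2 - d)) * ⟪sgrad u x t, sgrad v x t⟫ := by
  intro x hx t ht
  have hNopen : IsOpen (Ω ×ˢ Ioo (0:ℝ) T) := hΩ.prod isOpen_Ioo
  have hp₀ : (x, t) ∈ Ω ×ˢ Ioo (0:ℝ) T := ⟨hx, ht⟩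
  set U : EuclideanSpace ℝ (Fin d) × ℝ → ℝ := fun p => u p.1 p.2 with hUdef
  set V : EuclideanSpace ℝ (Fin d) × ℝ → ℝ := fun p => v p.1 p.2 with hVdef
  have hUat : ∀ p ∈ Ω ×ˢ Ioo (0:ℝ) T, ContDiffAt ℝ 2 U p :=
    fun p hp => hu.contDiffAt (hNopen.mem_nhds hp)
  have hVat : ∀ p ∈ Ω ×ˢ Ioo (0:ℝ) T, ContDiffAt ℝ 2 V p :=
    fun p hp => hv.contDiffAt (hNopen.mem_nhds hp)
  have hUd : ∀ p ∈ Ω ×ˢ Ioo (0:ℝ) T, DifferentiableAt ℝ U p :=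
    fun p hp => (hUat p hp).differentiableAt two_ne_zero
  have hVd : ∀ p ∈ Ω ×ˢ Ioo (0:ℝ) T, DifferentiableAt ℝ V p :=
    fun p hp => (hVat p hp).differentiableAt two_ne_zero
  set Du := fderiv ℝ U with hDudef
  set Dv := fderiv ℝ V with hDvdef
  set Bu := fderiv ℝ Du (x, t) with hBudef
  set Bv := fderiv ℝ Dv (x, t) with hBvdef
  have hBu : HasFDerivAt Du Bu (x, t) := by
    have h2 : ContDiffAt ℝ 1 Du (x, t) := (hUat _ hp₀).fderiv_right (by norm_num)
    exact (h2.differentiableAt one_ne_zero).hasFDerivAt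
  have hBv : HasFDerivAt Dv Bv (x, t) := by
    have h2 : ContDiffAt ℝ 1 Dv (x, t) := (hVat _ hp₀).fderiv_right (by norm_num)
    exact (h2.differentiableAt one_ne_zero).hasFDerivAt
  have hsymU : ∀ w w', Bu w w' = Bu w' w :=
    fun w w' => (hUat _ hp₀).isSymmSndFDerivAt (by simp) w w'
  have hsymV : ∀ w w', Bv w w' = Bv w' w :=
    fun w w' => (hVat _ hp₀).isSymmSndFDerivAt (by simp) w w'
  -- translations
  have htdu : ∀ y s, (y, s) ∈ Ω ×ˢ Ioo (0:ℝ) T → tderiv u y s = Du (y, s) met :=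
    fun y s hp => (hasDerivAt_time (hUd _ hp)).deriv
  have htdv : ∀ y s, (y, s) ∈ Ω ×ˢ Ioo (0:ℝ) T → tderiv v y s = Dv (y, s) met :=
    fun y s hp => (hasDerivAt_time (hVd _ hp)).deriv
  have hsgu : ∀ y s, (y, s) ∈ Ω ×ˢ Ioo (0:ℝ) T → ∀ i, sgrad u y s i = Du (y, s) (mes i) := by
    intro y s hp i
    have h1 : sgrad u y s i = ⟪sgrad u y s, EuclideanSpace.single i 1⟫ := by
      simp [EuclideanSpace.inner_single_right]
    rw [h1]
    have h2 : ⟪sgrad u y s, EuclideanSpace.single i 1⟫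
        = fderiv ℝ (fun z => u z s) y (EuclideanSpace.single i 1) :=
      InnerProductSpace.toDual_symm_apply
    rw [h2, (hasFDerivAt_space (hUd _ hp)).fderiv]
    rfl
  have hsgv : ∀ y s, (y, s) ∈ Ω ×ˢ Ioo (0:ℝ) T → ∀ i, sgrad v y s i = Dv (y, s) (mes i) := by
    intro y s hp i
    have h1 : sgrad v y s i = ⟪sgrad v y s, EuclideanSpace.single i 1⟫ := by
      simp [EuclideanSpace.inner_single_right]
    rw [h1]
    have h2 : ⟪sgrad v y s, EuclideanSpace.single i 1⟫
        = fderiv ℝ (fun z => v z s) y (EuclideanSpace.single i 1) :=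
      InnerProductSpace.toDual_symm_apply
    rw [h2, (hasFDerivAt_space (hVd _ hp)).fderiv]
    rfl
  have hMu : ∀ y s, (y, s) ∈ Ω ×ˢ Ioo (0:ℝ) T →
      Mop ξ β Tstar u y s = -ξ * ∑ i, y i * Du (y, s) (mes i) + β * (s - Tstar) * Du (y, s) met := by
    intro y s hp
    rw [Mop, inner_eq_sum, htdu y s hp]
    congr 1
    · congr 1
      exact Finset.sum_congr rfl fun i _ => by rw [hsgu y s hp i]
  have hMv : ∀ y s, (y, s) ∈ Ω ×ˢ Ioo (0:ℝ) T →
      Mop ξ β Tstar v y s = -ξ * ∑ i, y i * Dv (y, s) (mes i) + β * (s - Tstar) * Dv (y, s) met := by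
    intro y s hp
    rw [Mop, inner_eq_sum, htdv y s hp]
    congr 1
    · congr 1
      exact Finset.sum_congr rfl fun i _ => by rw [hsgv y s hp i]
  have hqq : ∀ y s, (y, s) ∈ Ω ×ˢ Ioo (0:ℝ) T →
      ⟪sgrad u y s, sgrad v y s⟫ = ∑ i, Du (y, s) (mes i) * Dv (y, s) (mes i) := by
    intro y s hp
    rw [inner_eq_sum]
    exact Finset.sum_congr rfl fun i _ => by rw [hsgu y s hp i, hsgv y s hp i]
  -- wave operator translations
  have hWu : Wop c u x t = Bu met met - c ^ 2 * ∑ i, Bu (mes i) (mes i) := by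
    rw [Wop]
    congr 1
    · have hev : (fun s => tderiv u x s) =ᶠ[nhds t] fun s => Du (x, s) met := by
        filter_upwards [isOpen_Ioo.mem_nhds ht] with s hs using htdu x s ⟨hx, hs⟩
      rw [hev.deriv_eq, (hasDerivAt_time₂ hBu met).deriv]
    · congr 1
      rw [slap, _root_.sdiv]
      refine Finset.sum_congr rfl fun i _ => ?_
      have hev : (fun y => gradient (fun z => u z t) y i) =ᶠ[nhds x] fun y => Du (y, t) (mes i) := by
        filter_upwards [hΩ.mem_nhds hx] with y hy using hsgu y t ⟨hy, ht⟩ i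
      rw [hev.fderiv_eq, (hasFDerivAt_space₂ hBu (mes i)).fderiv, space₂_apply]
  have hWv : Wop c v x t = Bv met met - c ^ 2 * ∑ i, Bv (mes i) (mes i) := by
    rw [Wop]
    congr 1
    · have hev : (fun s => tderiv v x s) =ᶠ[nhds t] fun s => Dv (x, s) met := by
        filter_upwards [isOpen_Ioo.mem_nhds ht] with s hs using htdv x s ⟨hx, hs⟩
      rw [hev.deriv_eq, (hasDerivAt_time₂ hBv met).deriv]
    · congr 1
      rw [slap, _root_.sdiv]
      refine Finset.sum_congr rfl fun i _ => ?_
      have hev : (fun y => gradient (fun z => v z t) y i) =ᶠ[nhds x] fun y => Dv (y, t) (mes i) := by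
        filter_upwards [hΩ.mem_nhds hx] with y hy using hsgv y t ⟨hy, ht⟩ i
      rw [hev.fderiv_eq, (hasFDerivAt_space₂ hBv (mes i)).fderiv, space₂_apply]
  -- Part 1: the time-derivative term
  have hAu : ∀ w, HasDerivAt (fun s => Du (x, s) w) (Bu met w) t := fun w => hasDerivAt_time₂ hBu w
  have hAv : ∀ w, HasDerivAt (fun s => Dv (x, s) w) (Bv met w) t := fun w => hasDerivAt_time₂ hBv w
  have htau : HasDerivAt (fun s : ℝ => β * (s - Tstar)) (β * 1) t :=
    ((hasDerivAt_id t).sub_const Tstar).const_mul β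
  have hMus := (((HasDerivAt.fun_sum (fun i (_ : i ∈ Finset.univ) =>
      (hAu (mes i)).const_mul (x i))).const_mul (-ξ)).add (htau.mul (hAu met)))
  have hMvs := (((HasDerivAt.fun_sum (fun i (_ : i ∈ Finset.univ) =>
      (hAv (mes i)).const_mul (x i))).const_mul (-ξ)).add (htau.mul (hAv met)))
  have hKs := (((hAu met).mul (hAv met)).sub
      ((HasDerivAt.fun_sum (fun i (_ : i ∈ Finset.univ) =>
        (hAu (mes i)).mul (hAv (mes i)))).const_mul (c^2)))
  have hDer := (((hMus.mul (hAv met)).add ((hAu met).mul hMvs)).sub (htau.mul hKs))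
  have hevT1 : (fun s =>
        Mop ξ β Tstar u x s * tderiv v x s + tderiv u x s * Mop ξ β Tstar v x s
          - β * (s - Tstar) *
            (tderiv u x s * tderiv v x s - c ^ 2 * ⟪sgrad u x s, sgrad v x s⟫))
      =ᶠ[nhds t] (fun s =>
        (-ξ * ∑ i, x i * Du (x, s) (mes i) + β * (s - Tstar) * Du (x, s) met) * Dv (x, s) met
          + Du (x, s) met * (-ξ * ∑ i, x i * Dv (x, s) (mes i) + β * (s - Tstar) * Dv (x, s) met)
          - β * (s - Tstar) * (Du (x, s) met * Dv (x, s) met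
              - c ^ 2 * ∑ i, Du (x, s) (mes i) * Dv (x, s) (mes i))) := by
    filter_upwards [isOpen_Ioo.mem_nhds ht] with s hs
    rw [hMu x s ⟨hx, hs⟩, hMv x s ⟨hx, hs⟩, htdu x s ⟨hx, hs⟩, htdv x s ⟨hx, hs⟩, hqq x s ⟨hx, hs⟩]
  have hT1 : deriv (fun s =>
        Mop ξ β Tstar u x s * tderiv v x s + tderiv u x s * Mop ξ β Tstar v x s
          - β * (s - Tstar) *
            (tderiv u x s * tderiv v x s - c ^ 2 * ⟪sgrad u x s, sgrad v x s⟫)) t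
      = (-ξ * ∑ i, x i * Bu met (mes i) + β * Du (x, t) met
            + β * (t - Tstar) * Bu met met) * Dv (x, t) met
        + (-ξ * ∑ i, x i * Du (x, t) (mes i) + β * (t - Tstar) * Du (x, t) met) * Bv met met
        + Bu met met * (-ξ * ∑ i, x i * Dv (x, t) (mes i) + β * (t - Tstar) * Dv (x, t) met)
        + Du (x, t) met * (-ξ * ∑ i, x i * Bv met (mes i) + β * Dv (x, t) met
            + β * (t - Tstar) * Bv met met)
        - β * (Du (x, t) met * Dv (x, t) met
            - c ^ 2 * ∑ i, Du (x, t) (mes i) * Dv (x, t) (mes i))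
        - β * (t - Tstar) * (Bu met met * Dv (x, t) met + Du (x, t) met * Bv met met
            - c ^ 2 * ((∑ i, Bu met (mes i) * Dv (x, t) (mes i))
                + ∑ i, Du (x, t) (mes i) * Bv met (mes i))) := by
    rw [hevT1.deriv_eq]; erw [hDer.deriv]; rw [Finset.sum_add_distrib]
    simp only [Pi.mul_apply, Pi.add_apply, Pi.sub_apply, Finset.sum_apply]
    ring
  -- Part 2: the divergence term
  have hDus : ∀ w, HasFDerivAt (fun y => Du (y, t) w)
      (((ContinuousLinearMap.apply ℝ ℝ w).comp Bu).comp
        ((ContinuousLinearMap.id ℝ (EuclideanSpace ℝ (Fin d))).prod 0)) x :=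
    fun w => hasFDerivAt_space₂ hBu w
  have hDvs : ∀ w, HasFDerivAt (fun y => Dv (y, t) w)
      (((ContinuousLinearMap.apply ℝ ℝ w).comp Bv).comp
        ((ContinuousLinearMap.id ℝ (EuclideanSpace ℝ (Fin d))).prod 0)) x :=
    fun w => hasFDerivAt_space₂ hBv w
  have hevF : ∀ i : Fin d, (fun y =>
        ((c ^ 2 * Mop ξ β Tstar u y t) • sgrad v y t
          + (c ^ 2 * Mop ξ β Tstar v y t) • sgrad u y t
          - (ξ * (tderiv u y t * tderiv v y t
              - c ^ 2 * ⟪sgrad u y t, sgrad v y t⟫)) • y) i)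
      =ᶠ[nhds x] (fun y =>
        c ^ 2 * (-ξ * ∑ j, y j * Du (y, t) (mes j) + β * (t - Tstar) * Du (y, t) met)
            * Dv (y, t) (mes i)
          + c ^ 2 * (-ξ * ∑ j, y j * Dv (y, t) (mes j) + β * (t - Tstar) * Dv (y, t) met)
            * Du (y, t) (mes i)
          - ξ * (Du (y, t) met * Dv (y, t) met
              - c ^ 2 * ∑ j, Du (y, t) (mes j) * Dv (y, t) (mes j)) * y i) := by
    intro i
    filter_upwards [hΩ.mem_nhds hx] with y hy
    have hp : (y, t) ∈ Ω ×ˢ Ioo (0:ℝ) T := ⟨hy, ht⟩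
    simp only [PiLp.add_apply, PiLp.sub_apply, PiLp.smul_apply, smul_eq_mul]
    rw [hMu y t hp, hMv y t hp, htdu y t hp, htdv y t hp, hqq y t hp, hsgu y t hp i, hsgv y t hp i]
  have hdivterm : ∀ i : Fin d, fderiv ℝ (fun y =>
        ((c ^ 2 * Mop ξ β Tstar u y t) • sgrad v y t
          + (c ^ 2 * Mop ξ β Tstar v y t) • sgrad u y t
          - (ξ * (tderiv u y t * tderiv v y t
              - c ^ 2 * ⟪sgrad u y t, sgrad v y t⟫)) • y) i) x (EuclideanSpace.single i 1)
      = c ^ 2 * (-ξ * (∑ j, x j * Bu (mes i) (mes j) + Du (x, t) (mes i))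
            + β * (t - Tstar) * Bu (mes i) met) * Dv (x, t) (mes i)
        + c ^ 2 * (-ξ * ∑ j, x j * Du (x, t) (mes j) + β * (t - Tstar) * Du (x, t) met)
            * Bv (mes i) (mes i)
        + c ^ 2 * (-ξ * (∑ j, x j * Bv (mes i) (mes j) + Dv (x, t) (mes i))
            + β * (t - Tstar) * Bv (mes i) met) * Du (x, t) (mes i)
        + c ^ 2 * (-ξ * ∑ j, x j * Dv (x, t) (mes j) + β * (t - Tstar) * Dv (x, t) met)
            * Bu (mes i) (mes i)
        - ξ * (Bu (mes i) met * Dv (x, t) met + Du (x, t) met * Bv (mes i) met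
            - c ^ 2 * ((∑ j, Du (x, t) (mes j) * Bv (mes i) (mes j))
                + ∑ j, Dv (x, t) (mes j) * Bu (mes i) (mes j))) * x i
        - ξ * (Du (x, t) met * Dv (x, t) met
            - c ^ 2 * ∑ j, Du (x, t) (mes j) * Dv (x, t) (mes j)) := by
    intro i
    have hMuS := ((HasFDerivAt.fun_sum (fun j (_ : j ∈ Finset.univ) =>
        (hasFDerivAt_coord j).mul (hDus (mes j)))).const_mul (-ξ)).add
        ((hDus met).const_mul (β * (t - Tstar)))
    have hMvS := ((HasFDerivAt.fun_sum (fun j (_ : j ∈ Finset.univ) =>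
        (hasFDerivAt_coord j).mul (hDvs (mes j)))).const_mul (-ξ)).add
        ((hDvs met).const_mul (β * (t - Tstar)))
    have hKS := ((hDus met).mul (hDvs met)).sub
        ((HasFDerivAt.fun_sum (fun j (_ : j ∈ Finset.univ) =>
          (hDus (mes j)).mul (hDvs (mes j)))).const_mul (c ^ 2))
    have hFi := (((hMuS.const_mul (c ^ 2)).mul (hDvs (mes i))).add
        ((hMvS.const_mul (c ^ 2)).mul (hDus (mes i)))).sub
        ((hKS.const_mul ξ).mul (hasFDerivAt_coord i))
    rw [(hevF i).fderiv_eq]; erw [hFi.fderiv]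
    simp only [ContinuousLinearMap.add_apply, ContinuousLinearMap.coe_sub', Pi.sub_apply, Pi.mul_apply, Pi.add_apply,
      ContinuousLinearMap.coe_smul', Pi.smul_apply, ContinuousLinearMap.smul_apply,
      ContinuousLinearMap.coe_sum', Finset.sum_apply, space₂_apply, PiLp.proj_apply,
      EuclideanSpace.single_apply, smul_eq_mul, mul_ite, mul_one, mul_zero,
      Finset.sum_add_distrib, Finset.sum_ite_eq', Finset.mem_univ, if_true]
    ring
  have hT2 : sdiv (fun y =>
        (c ^ 2 * Mop ξ β Tstar u y t) • sgrad v y t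
          + (c ^ 2 * Mop ξ β Tstar v y t) • sgrad u y t
          - (ξ * (tderiv u y t * tderiv v y t
              - c ^ 2 * ⟪sgrad u y t, sgrad v y t⟫)) • y) x
      = ∑ i, (c ^ 2 * (-ξ * (∑ j, x j * Bu (mes i) (mes j) + Du (x, t) (mes i))
            + β * (t - Tstar) * Bu (mes i) met) * Dv (x, t) (mes i)
        + c ^ 2 * (-ξ * ∑ j, x j * Du (x, t) (mes j) + β * (t - Tstar) * Du (x, t) met)
            * Bv (mes i) (mes i)
        + c ^ 2 * (-ξ * (∑ j, x j * Bv (mes i) (mes j) + Dv (x, t) (mes i))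
            + β * (t - Tstar) * Bv (mes i) met) * Du (x, t) (mes i)
        + c ^ 2 * (-ξ * ∑ j, x j * Dv (x, t) (mes j) + β * (t - Tstar) * Dv (x, t) met)
            * Bu (mes i) (mes i)
        - ξ * (Bu (mes i) met * Dv (x, t) met + Du (x, t) met * Bv (mes i) met
            - c ^ 2 * ((∑ j, Du (x, t) (mes j) * Bv (mes i) (mes j))
                + ∑ j, Dv (x, t) (mes j) * Bu (mes i) (mes j))) * x i
        - ξ * (Du (x, t) met * Dv (x, t) met
            - c ^ 2 * ∑ j, Du (x, t) (mes j) * Dv (x, t) (mes j))) := by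
    rw [_root_.sdiv]
    exact Finset.sum_congr rfl fun i _ => hdivterm i
  -- endgame
  have cku : ∀ i : Fin d, Bu (mes i) met = Bu met (mes i) := fun i => hsymU _ _
  have ckv : ∀ i : Fin d, Bv (mes i) met = Bv met (mes i) := fun i => hsymV _ _
  have hexpand : ∀ i ∈ (Finset.univ : Finset (Fin d)),
      (c ^ 2 * (-ξ * (∑ j, x j * Bu (mes i) (mes j) + Du (x, t) (mes i))
            + β * (t - Tstar) * Bu (mes i) met) * Dv (x, t) (mes i)
        + c ^ 2 * (-ξ * ∑ j, x j * Du (x, t) (mes j) + β * (t - Tstar) * Du (x, t) met)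
            * Bv (mes i) (mes i)
        + c ^ 2 * (-ξ * (∑ j, x j * Bv (mes i) (mes j) + Dv (x, t) (mes i))
            + β * (t - Tstar) * Bv (mes i) met) * Du (x, t) (mes i)
        + c ^ 2 * (-ξ * ∑ j, x j * Dv (x, t) (mes j) + β * (t - Tstar) * Dv (x, t) met)
            * Bu (mes i) (mes i)
        - ξ * (Bu (mes i) met * Dv (x, t) met + Du (x, t) met * Bv (mes i) met
            - c ^ 2 * ((∑ j, Du (x, t) (mes j) * Bv (mes i) (mes j))
                + ∑ j, Dv (x, t) (mes j) * Bu (mes i) (mes j))) * x i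
        - ξ * (Du (x, t) met * Dv (x, t) met
            - c ^ 2 * ∑ j, Du (x, t) (mes j) * Dv (x, t) (mes j)))
      = (-(ξ * c ^ 2)) * ((∑ j, x j * Bu (mes i) (mes j)) * Dv (x, t) (mes i))
        + (-(ξ * c ^ 2)) * (Du (x, t) (mes i) * Dv (x, t) (mes i))
        + (c ^ 2 * (β * (t - Tstar))) * (Bu met (mes i) * Dv (x, t) (mes i))
        + (c ^ 2 * (-ξ * ∑ j, x j * Du (x, t) (mes j) + β * (t - Tstar) * Du (x, t) met))
            * Bv (mes i) (mes i)
        + (-(ξ * c ^ 2)) * ((∑ j, x j * Bv (mes i) (mes j)) * Du (x, t) (mes i))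
        + (-(ξ * c ^ 2)) * (Du (x, t) (mes i) * Dv (x, t) (mes i))
        + (c ^ 2 * (β * (t - Tstar))) * (Du (x, t) (mes i) * Bv met (mes i))
        + (c ^ 2 * (-ξ * ∑ j, x j * Dv (x, t) (mes j) + β * (t - Tstar) * Dv (x, t) met))
            * Bu (mes i) (mes i)
        + (-(ξ * Dv (x, t) met)) * (x i * Bu met (mes i))
        + (-(ξ * Du (x, t) met)) * (x i * Bv met (mes i))
        + (ξ * c ^ 2) * (x i * ∑ j, Du (x, t) (mes j) * Bv (mes i) (mes j))
        + (ξ * c ^ 2) * (x i * ∑ j, Dv (x, t) (mes j) * Bu (mes i) (mes j))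
        + (-(ξ * (Du (x, t) met * Dv (x, t) met
            - c ^ 2 * ∑ j, Du (x, t) (mes j) * Dv (x, t) (mes j)))) := by
    intro i _
    rw [cku i, ckv i]
    ring
  have hswapu : ∑ i, x i * ∑ j, Dv (x, t) (mes j) * Bu (mes i) (mes j)
      = ∑ i, (∑ j, x j * Bu (mes i) (mes j)) * Dv (x, t) (mes i) := by
    simp only [Finset.mul_sum, Finset.sum_mul]
    rw [Finset.sum_comm]
    exact Finset.sum_congr rfl fun i _ => Finset.sum_congr rfl fun j _ => by
      rw [hsymU (mes j) (mes i)]; ring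
  have hswapv : ∑ i, x i * ∑ j, Du (x, t) (mes j) * Bv (mes i) (mes j)
      = ∑ i, (∑ j, x j * Bv (mes i) (mes j)) * Du (x, t) (mes i) := by
    simp only [Finset.mul_sum, Finset.sum_mul]
    rw [Finset.sum_comm]
    exact Finset.sum_congr rfl fun i _ => Finset.sum_congr rfl fun j _ => by
      rw [hsymV (mes j) (mes i)]; ring
  rw [hT1, hT2, Finset.sum_congr rfl hexpand, hMu x t hp₀, hMv x t hp₀, hWu, hWv,
    htdu x t hp₀, htdv x t hp₀, hqq x t hp₀]
  simp only [Finset.sum_add_distrib, ← Finset.mul_sum, Finset.sum_const, Finset.card_univ,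
    Fintype.card_fin, nsmul_eq_mul]
  rw [hswapu, hswapv]
  ring
end

section
/- The linear functional F of the space-time Morawetz formulation is continuous: |F(v)| ≤ C_F ‖(f,u₀,u₁,g_I)‖_d ‖v‖_V for all v ∈ W, where ‖(f,u₀,u₁,g_I)‖²_d = T²‖f‖²_Q + T⁻¹‖u₀‖²_{Ω₀} + T‖u₁‖²_{Ω₀} + c²T‖∇u₀‖²_{Ω₀} + c²L_I‖g_I‖²_{Σ_I}, and C_F = max{ ξL_I/(cT) + βν + A_Q, ξ + βν cT/L_I, A_{Ω₀}, √2(βν + ξL_I/(cT)) }. -/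
open MeasureTheory Set
open scoped RealInnerProductSpace

noncomputable section

/-- The lateral boundary measure on `Σ_I = Γ_I × (0,T)`: the product of the surface
measure `σ` on the (impedance part of the) boundary of `Ω` with Lebesgue measure on `(0,T)`. -/
def SigmaI {d : ℕ} (σ : Measure (EuclideanSpace ℝ (Fin d))) (T : ℝ) :
    Measure (EuclideanSpace ℝ (Fin d) × ℝ) :=
  σ.prod (volume.restrict (Ioo (0:ℝ) T))

/-- The bilinear form `b` of the space–time Morawetz formulation for the interior
impedance problem (formula (5.6) of the paper), with `σ` the surface measure on `∂Ω`
and `nv` the outward unit normal field. -/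
def bform {d : ℕ} (Ω : Set (EuclideanSpace ℝ (Fin d)))
    (σ : Measure (EuclideanSpace ℝ (Fin d)))
    (nv : EuclideanSpace ℝ (Fin d) → EuclideanSpace ℝ (Fin d))
    (T c θ ξ β Tstar AQ AΩ : ℝ)
    (u v : EuclideanSpace ℝ (Fin d) → ℝ → ℝ) : ℝ :=
  (∫ p in Ω ×ˢ Ioo (0:ℝ) T,
      (Mop ξ β Tstar u p.1 p.2 * Wop c v p.1 p.2
        + (β + ξ * d) * (tderiv u p.1 p.2 * tderiv v p.1 p.2)
        + c ^ 2 * (β + 2 * ξ - d * ξ) * ⟪sgrad u p.1 p.2, sgrad v p.1 p.2⟫))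
  + (∫ x in Ω,
      (ξ * ⟪x, tderiv u x T • sgrad v x T + tderiv v x T • sgrad u x T⟫
        - β * (T - Tstar) * (tderiv u x T * tderiv v x T
            + c ^ 2 * ⟪sgrad u x T, sgrad v x T⟫)))
  + (∫ p, (c ^ 2 * Mop ξ β Tstar u p.1 p.2 * ⟪nv p.1, sgrad v p.1 p.2⟫
        - c * θ⁻¹ * tderiv u p.1 p.2 * Mop ξ β Tstar v p.1 p.2
        + ξ * ⟪p.1, nv p.1⟫ * (-(tderiv u p.1 p.2 * tderiv v p.1 p.2)
            + c ^ 2 * ⟪sgrad u p.1 p.2, sgrad v p.1 p.2⟫)) ∂(SigmaI σ T))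
  + AQ * T ^ 2 * (∫ p in Ω ×ˢ Ioo (0:ℝ) T, Wop c u p.1 p.2 * Wop c v p.1 p.2)
  + AΩ * T⁻¹ * ∫ x in Ω, u x 0 * v x 0

/-- The squared norm `‖v‖²_V` of the space–time Morawetz formulation (formula (5.10)). -/
def Vsq {d : ℕ} (Ω : Set (EuclideanSpace ℝ (Fin d)))
    (σ : Measure (EuclideanSpace ℝ (Fin d))) (T c LI : ℝ)
    (v : EuclideanSpace ℝ (Fin d) → ℝ → ℝ) : ℝ :=
  (∫ p in Ω ×ˢ Ioo (0:ℝ) T, (tderiv v p.1 p.2) ^ 2)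
  + c ^ 2 * (∫ p in Ω ×ˢ Ioo (0:ℝ) T, ‖sgrad v p.1 p.2‖ ^ 2)
  + T ^ 2 * (∫ p in Ω ×ˢ Ioo (0:ℝ) T, (Wop c v p.1 p.2) ^ 2)
  + T * (∫ x in Ω, (tderiv v x T) ^ 2)
  + c ^ 2 * T * (∫ x in Ω, ‖sgrad v x T‖ ^ 2)
  + T * (∫ x in Ω, (tderiv v x 0) ^ 2)
  + c ^ 2 * T * (∫ x in Ω, ‖sgrad v x 0‖ ^ 2)
  + T⁻¹ * (∫ x in Ω, (v x 0) ^ 2)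
  + LI * (∫ p, (tderiv v p.1 p.2) ^ 2 ∂(SigmaI σ T))
  + c ^ 2 * LI * (∫ p, ‖sgrad v p.1 p.2‖ ^ 2 ∂(SigmaI σ T))

/-- Membership in the graph space `W`: all the (classical) quantities entering the norm
`‖·‖_V` are square integrable on the corresponding pieces of `Q` and of `∂Q`. -/
def MemW {d : ℕ} (Ω : Set (EuclideanSpace ℝ (Fin d)))
    (σ : Measure (EuclideanSpace ℝ (Fin d))) (T c : ℝ)
    (v : EuclideanSpace ℝ (Fin d) → ℝ → ℝ) : Prop :=
  IntegrableOn (fun p : EuclideanSpace ℝ (Fin d) × ℝ => (v p.1 p.2) ^ 2)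
      (Ω ×ˢ Ioo (0:ℝ) T)
  ∧ IntegrableOn (fun p : EuclideanSpace ℝ (Fin d) × ℝ => (tderiv v p.1 p.2) ^ 2)
      (Ω ×ˢ Ioo (0:ℝ) T)
  ∧ IntegrableOn (fun p : EuclideanSpace ℝ (Fin d) × ℝ => ‖sgrad v p.1 p.2‖ ^ 2)
      (Ω ×ˢ Ioo (0:ℝ) T)
  ∧ IntegrableOn (fun p : EuclideanSpace ℝ (Fin d) × ℝ => (Wop c v p.1 p.2) ^ 2)
      (Ω ×ˢ Ioo (0:ℝ) T)
  ∧ IntegrableOn (fun x => (tderiv v x T) ^ 2) Ω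
  ∧ IntegrableOn (fun x => ‖sgrad v x T‖ ^ 2) Ω
  ∧ IntegrableOn (fun x => (tderiv v x 0) ^ 2) Ω
  ∧ IntegrableOn (fun x => ‖sgrad v x 0‖ ^ 2) Ω
  ∧ IntegrableOn (fun x => (v x 0) ^ 2) Ω
  ∧ Integrable (fun p : EuclideanSpace ℝ (Fin d) × ℝ => (tderiv v p.1 p.2) ^ 2) (SigmaI σ T)
  ∧ Integrable (fun p : EuclideanSpace ℝ (Fin d) × ℝ => ‖sgrad v p.1 p.2‖ ^ 2) (SigmaI σ T)

end

noncomputable section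

/-- The linear functional `F` of the space–time Morawetz formulation (formula (5.7)). -/
def Ffun {d : ℕ} (Ω : Set (EuclideanSpace ℝ (Fin d)))
    (σ : Measure (EuclideanSpace ℝ (Fin d)))
    (T c ξ β Tstar AQ AΩ : ℝ)
    (f : EuclideanSpace ℝ (Fin d) → ℝ → ℝ)
    (gI : EuclideanSpace ℝ (Fin d) → ℝ → ℝ)
    (u0 u1 : EuclideanSpace ℝ (Fin d) → ℝ)
    (v : EuclideanSpace ℝ (Fin d) → ℝ → ℝ) : ℝ :=
  -(∫ p in Ω ×ˢ Ioo (0:ℝ) T, f p.1 p.2 * Mop ξ β Tstar v p.1 p.2)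
    - c ^ 2 * (∫ p, gI p.1 p.2 * Mop ξ β Tstar v p.1 p.2 ∂(SigmaI σ T))
    + (∫ x in Ω,
        (ξ * ⟪x, u1 x • sgrad v x 0 + tderiv v x 0 • gradient u0 x⟫
          + β * Tstar * (u1 x * tderiv v x 0 + c ^ 2 * ⟪gradient u0 x, sgrad v x 0⟫)))
    + AQ * T ^ 2 * (∫ p in Ω ×ˢ Ioo (0:ℝ) T, f p.1 p.2 * Wop c v p.1 p.2)
    + AΩ * T⁻¹ * ∫ x in Ω, u0 x * v x 0

/-- The squared data norm `‖(f,u₀,u₁,g_I)‖²_d` (formula (5.13)). -/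
def datasq {d : ℕ} (Ω : Set (EuclideanSpace ℝ (Fin d)))
    (σ : Measure (EuclideanSpace ℝ (Fin d))) (T c LI : ℝ)
    (f : EuclideanSpace ℝ (Fin d) → ℝ → ℝ)
    (gI : EuclideanSpace ℝ (Fin d) → ℝ → ℝ)
    (u0 u1 : EuclideanSpace ℝ (Fin d) → ℝ) : ℝ :=
  T ^ 2 * (∫ p in Ω ×ˢ Ioo (0:ℝ) T, (f p.1 p.2) ^ 2)
    + T⁻¹ * (∫ x in Ω, (u0 x) ^ 2)
    + T * (∫ x in Ω, (u1 x) ^ 2)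
    + c ^ 2 * T * (∫ x in Ω, ‖gradient u0 x‖ ^ 2)
    + c ^ 2 * LI * (∫ p, (gI p.1 p.2) ^ 2 ∂(SigmaI σ T))

end


section H17
open MeasureTheory Set
open scoped RealInnerProductSpace

section Helpers
variable {α : Type*} [MeasurableSpace α] {μ : Measure α}

lemma aesm_abs {φ : α → ℝ} (hφ : AEStronglyMeasurable (fun x => φ x ^ 2) μ) :
    AEStronglyMeasurable (fun x => |φ x|) μ := by
  have : (fun x => |φ x|) = fun x => Real.sqrt (φ x ^ 2) := by
    funext x; rw [Real.sqrt_sq_eq_abs]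
  rw [this]
  exact Real.continuous_sqrt.comp_aestronglyMeasurable hφ

lemma int_abs_mul {φ ψ : α → ℝ} (hφ : Integrable (fun x => φ x ^ 2) μ)
    (hψ : Integrable (fun x => ψ x ^ 2) μ) :
    Integrable (fun x => |φ x| * |ψ x|) μ := by
  refine Integrable.mono' ((hφ.add hψ).div_const 2) ((aesm_abs hφ.1).mul (aesm_abs hψ.1)) ?_
  filter_upwards with x
  have h := sq_nonneg (|φ x| - |ψ x|)
  have h1 : ‖|φ x| * |ψ x|‖ = |φ x| * |ψ x| :=
    Real.norm_of_nonneg (mul_nonneg (abs_nonneg _) (abs_nonneg _))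
  rw [h1]
  simp only [Pi.add_apply]
  nlinarith [sq_abs (φ x), sq_abs (ψ x)]

lemma cs_integral {φ ψ : α → ℝ} (hφ : Integrable (fun x => φ x ^ 2) μ)
    (hψ : Integrable (fun x => ψ x ^ 2) μ) :
    ∫ x, |φ x| * |ψ x| ∂μ ≤
      Real.sqrt (∫ x, φ x ^ 2 ∂μ) * Real.sqrt (∫ x, ψ x ^ 2 ∂μ) := by
  set A := ∫ x, φ x ^ 2 ∂μ with hA
  set B := ∫ x, ψ x ^ 2 ∂μ with hB
  have hA0 : 0 ≤ A := integral_nonneg fun x => sq_nonneg _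
  have hB0 : 0 ≤ B := integral_nonneg fun x => sq_nonneg _
  have key : ∀ ε : ℝ, 0 < ε → (∫ x, |φ x| * |ψ x| ∂μ) ≤ (ε * A + ε⁻¹ * B) / 2 := by
    intro ε hε
    have hint : Integrable (fun x => (ε * φ x ^ 2 + ε⁻¹ * ψ x ^ 2) / 2) μ :=
      ((hφ.const_mul ε).add (hψ.const_mul ε⁻¹)).div_const 2
    have hb : ∀ x, |φ x| * |ψ x| ≤ (ε * φ x ^ 2 + ε⁻¹ * ψ x ^ 2) / 2 := by
      intro x
      have h1 : 0 ≤ (ε * |φ x| - |ψ x|)^2 := sq_nonneg _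
      have h2 : ε⁻¹ * ε = 1 := inv_mul_cancel₀ hε.ne'
      nlinarith [sq_abs (φ x), sq_abs (ψ x), abs_nonneg (φ x), abs_nonneg (ψ x), mul_pos hε hε]
    calc ∫ x, |φ x| * |ψ x| ∂μ ≤ ∫ x, (ε * φ x ^ 2 + ε⁻¹ * ψ x ^ 2) / 2 ∂μ :=
          integral_mono (int_abs_mul hφ hψ) hint hb
      _ = (ε * A + ε⁻¹ * B) / 2 := by
          rw [integral_div, integral_add (hφ.const_mul ε) (hψ.const_mul ε⁻¹),
            integral_const_mul, integral_const_mul]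
  rcases eq_or_lt_of_le hA0 with hA' | hA'
  · have hzero : (fun x => φ x ^ 2) =ᵐ[μ] 0 := by
      rw [← integral_eq_zero_iff_of_nonneg (fun x => sq_nonneg (φ x)) hφ]
      exact hA'.symm
    have : (fun x => |φ x| * |ψ x|) =ᵐ[μ] 0 := by
      filter_upwards [hzero] with x hx
      have : φ x = 0 := pow_eq_zero_iff (n := 2) (by norm_num) |>.mp hx
      simp [this]
    rw [integral_congr_ae this]
    simp only [Pi.zero_apply, integral_zero]
    positivity
  · rcases eq_or_lt_of_le hB0 with hB' | hB'
    · have hzero : (fun x => ψ x ^ 2) =ᵐ[μ] 0 := by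
        rw [← integral_eq_zero_iff_of_nonneg (fun x => sq_nonneg (ψ x)) hψ]
        exact hB'.symm
      have : (fun x => |φ x| * |ψ x|) =ᵐ[μ] 0 := by
        filter_upwards [hzero] with x hx
        have : ψ x = 0 := pow_eq_zero_iff (n := 2) (by norm_num) |>.mp hx
        simp [this]
      rw [integral_congr_ae this]
      simp only [Pi.zero_apply, integral_zero]
      positivity
    · have hε : (0:ℝ) < Real.sqrt B / Real.sqrt A := by positivity
      have h := key _ hε
      have hsA : Real.sqrt A ^ 2 = A := Real.sq_sqrt hA0
      have hsB : Real.sqrt B ^ 2 = B := Real.sq_sqrt hB0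
      have hsA0 : 0 < Real.sqrt A := Real.sqrt_pos.mpr hA'
      have hsB0 : 0 < Real.sqrt B := Real.sqrt_pos.mpr hB'
      have : (Real.sqrt B / Real.sqrt A * A + (Real.sqrt B / Real.sqrt A)⁻¹ * B) / 2
          = Real.sqrt A * Real.sqrt B := by
        field_simp
        nlinarith
      linarith [h, this ▸ h]

lemma abs_integral_le4 {h φ1 ψ1 φ2 ψ2 φ3 ψ3 φ4 ψ4 : α → ℝ} {c1 c2 c3 c4 : ℝ}
    (hc1 : 0 ≤ c1) (hc2 : 0 ≤ c2) (hc3 : 0 ≤ c3) (hc4 : 0 ≤ c4)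
    (hφ1 : Integrable (fun x => φ1 x ^ 2) μ) (hψ1 : Integrable (fun x => ψ1 x ^ 2) μ)
    (hφ2 : Integrable (fun x => φ2 x ^ 2) μ) (hψ2 : Integrable (fun x => ψ2 x ^ 2) μ)
    (hφ3 : Integrable (fun x => φ3 x ^ 2) μ) (hψ3 : Integrable (fun x => ψ3 x ^ 2) μ)
    (hφ4 : Integrable (fun x => φ4 x ^ 2) μ) (hψ4 : Integrable (fun x => ψ4 x ^ 2) μ)
    (hb : ∀ᵐ x ∂μ, |h x| ≤ c1 * (|φ1 x| * |ψ1 x|) + c2 * (|φ2 x| * |ψ2 x|)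
      + c3 * (|φ3 x| * |ψ3 x|) + c4 * (|φ4 x| * |ψ4 x|)) :
    |∫ x, h x ∂μ| ≤
      c1 * (Real.sqrt (∫ x, φ1 x ^ 2 ∂μ) * Real.sqrt (∫ x, ψ1 x ^ 2 ∂μ))
      + c2 * (Real.sqrt (∫ x, φ2 x ^ 2 ∂μ) * Real.sqrt (∫ x, ψ2 x ^ 2 ∂μ))
      + c3 * (Real.sqrt (∫ x, φ3 x ^ 2 ∂μ) * Real.sqrt (∫ x, ψ3 x ^ 2 ∂μ))
      + c4 * (Real.sqrt (∫ x, φ4 x ^ 2 ∂μ) * Real.sqrt (∫ x, ψ4 x ^ 2 ∂μ)) := by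
  have i1 := int_abs_mul hφ1 hψ1
  have i2 := int_abs_mul hφ2 hψ2
  have i3 := int_abs_mul hφ3 hψ3
  have i4 := int_abs_mul hφ4 hψ4
  have i12 : Integrable (fun x => c1 * (|φ1 x| * |ψ1 x|) + c2 * (|φ2 x| * |ψ2 x|)) μ :=
    (i1.const_mul c1).add (i2.const_mul c2)
  have i123 : Integrable (fun x => c1 * (|φ1 x| * |ψ1 x|) + c2 * (|φ2 x| * |ψ2 x|)
      + c3 * (|φ3 x| * |ψ3 x|)) μ := i12.add (i3.const_mul c3)
  have iG : Integrable (fun x => c1 * (|φ1 x| * |ψ1 x|) + c2 * (|φ2 x| * |ψ2 x|)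
      + c3 * (|φ3 x| * |ψ3 x|) + c4 * (|φ4 x| * |ψ4 x|)) μ := i123.add (i4.const_mul c4)
  have step1 : |∫ x, h x ∂μ| ≤ ∫ x, ‖h x‖ ∂μ := by
    rw [← Real.norm_eq_abs]; exact norm_integral_le_integral_norm h
  have step2 : ∫ x, ‖h x‖ ∂μ ≤ ∫ x, (c1 * (|φ1 x| * |ψ1 x|) + c2 * (|φ2 x| * |ψ2 x|)
      + c3 * (|φ3 x| * |ψ3 x|) + c4 * (|φ4 x| * |ψ4 x|)) ∂μ := by
    refine integral_mono_of_nonneg (Filter.Eventually.of_forall fun x => norm_nonneg _) iG ?_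
    filter_upwards [hb] with x hx
    simpa [Real.norm_eq_abs] using hx
  have step3 : ∫ x, (c1 * (|φ1 x| * |ψ1 x|) + c2 * (|φ2 x| * |ψ2 x|)
      + c3 * (|φ3 x| * |ψ3 x|) + c4 * (|φ4 x| * |ψ4 x|)) ∂μ
      = c1 * ∫ x, |φ1 x| * |ψ1 x| ∂μ + c2 * ∫ x, |φ2 x| * |ψ2 x| ∂μ
      + c3 * ∫ x, |φ3 x| * |ψ3 x| ∂μ + c4 * ∫ x, |φ4 x| * |ψ4 x| ∂μ := by
    rw [integral_add i123 (i4.const_mul c4), integral_add i12 (i3.const_mul c3),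
      integral_add (i1.const_mul c1) (i2.const_mul c2),
      integral_const_mul, integral_const_mul, integral_const_mul, integral_const_mul]
  have e1 := mul_le_mul_of_nonneg_left (cs_integral hφ1 hψ1) hc1
  have e2 := mul_le_mul_of_nonneg_left (cs_integral hφ2 hψ2) hc2
  have e3 := mul_le_mul_of_nonneg_left (cs_integral hφ3 hψ3) hc3
  have e4 := mul_le_mul_of_nonneg_left (cs_integral hφ4 hψ4) hc4
  linarith [step1, step2, step3.le, step3.ge]

lemma abs_integral_le2 {h φ1 ψ1 φ2 ψ2 : α → ℝ} {c1 c2 : ℝ}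
    (hc1 : 0 ≤ c1) (hc2 : 0 ≤ c2)
    (hφ1 : Integrable (fun x => φ1 x ^ 2) μ) (hψ1 : Integrable (fun x => ψ1 x ^ 2) μ)
    (hφ2 : Integrable (fun x => φ2 x ^ 2) μ) (hψ2 : Integrable (fun x => ψ2 x ^ 2) μ)
    (hb : ∀ᵐ x ∂μ, |h x| ≤ c1 * (|φ1 x| * |ψ1 x|) + c2 * (|φ2 x| * |ψ2 x|)) :
    |∫ x, h x ∂μ| ≤
      c1 * (Real.sqrt (∫ x, φ1 x ^ 2 ∂μ) * Real.sqrt (∫ x, ψ1 x ^ 2 ∂μ))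
      + c2 * (Real.sqrt (∫ x, φ2 x ^ 2 ∂μ) * Real.sqrt (∫ x, ψ2 x ^ 2 ∂μ)) := by
  have := abs_integral_le4 (h := h) (φ3 := φ1) (ψ3 := ψ1) (φ4 := φ1) (ψ4 := ψ1)
    (c3 := 0) (c4 := 0) hc1 hc2 le_rfl le_rfl hφ1 hψ1 hφ2 hψ2 hφ1 hψ1 hφ1 hψ1 ?_
  · linarith [this]
  · filter_upwards [hb] with x hx; linarith [hx]

lemma abs_integral_le1 {h φ1 ψ1 : α → ℝ}
    (hφ1 : Integrable (fun x => φ1 x ^ 2) μ) (hψ1 : Integrable (fun x => ψ1 x ^ 2) μ)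
    (hb : ∀ᵐ x ∂μ, |h x| ≤ |φ1 x| * |ψ1 x|) :
    |∫ x, h x ∂μ| ≤
      Real.sqrt (∫ x, φ1 x ^ 2 ∂μ) * Real.sqrt (∫ x, ψ1 x ^ 2 ∂μ) := by
  have := abs_integral_le2 (h := h) (φ2 := φ1) (ψ2 := ψ1) (c1 := 1) (c2 := 0)
    zero_le_one le_rfl hφ1 hψ1 hφ1 hψ1 ?_
  · linarith [this]
  · filter_upwards [hb] with x hx; linarith [hx]

lemma le_sqrt_mul_sqrt {x y z : ℝ} (hx : 0 ≤ x) (hy : 0 ≤ y) (hz : 0 ≤ z)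
    (h : x ^ 2 ≤ y * z) : x ≤ Real.sqrt y * Real.sqrt z := by
  rw [← Real.sqrt_mul hy]
  exact (Real.le_sqrt hx (mul_nonneg hy hz)).mpr h

lemma sqrt_CS4 {a1 b1 a2 b2 a3 b3 a4 b4 : ℝ} (h1 : 0 ≤ a1) (h2 : 0 ≤ b1)
    (h3 : 0 ≤ a2) (h4 : 0 ≤ b2) (h5 : 0 ≤ a3) (h6 : 0 ≤ b3) (h7 : 0 ≤ a4) (h8 : 0 ≤ b4) :
    a1 * b1 + a2 * b2 + a3 * b3 + a4 * b4 ≤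
      Real.sqrt (a1 ^ 2 + a2 ^ 2 + a3 ^ 2 + a4 ^ 2) *
        Real.sqrt (b1 ^ 2 + b2 ^ 2 + b3 ^ 2 + b4 ^ 2) := by
  refine le_sqrt_mul_sqrt (by positivity) (by positivity) (by positivity) ?_
  nlinarith [sq_nonneg (a1*b2 - a2*b1), sq_nonneg (a1*b3 - a3*b1), sq_nonneg (a1*b4 - a4*b1), sq_nonneg (a2*b3 - a3*b2), sq_nonneg (a2*b4 - a4*b2), sq_nonneg (a3*b4 - a4*b3), mul_nonneg h1 h2, mul_nonneg h3 h4, mul_nonneg h5 h6, mul_nonneg h7 h8]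

lemma Mop_ptwise {ξ β ν T LI fv i w g nx t : ℝ} (hξ : 0 < ξ) (hβ : 0 < β) (hT : 0 < T)
    (hν : 1 < ν) (hi : |i| ≤ nx * g) (hnxL : nx ≤ LI) (hg : 0 ≤ g)
    (hnx : 0 ≤ nx) (ht : 0 < t) (htT : t < T) :
    |fv * (-ξ * i + β * (t - ν * T) * w)| ≤ ξ * LI * (|fv| * |g|) + β * ν * T * (|fv| * |w|) := by
  rw [abs_mul]
  have hgabs : |g| = g := abs_of_nonneg hg
  have h1 : |(-ξ * i + β * (t - ν * T) * w)| ≤ ξ * (LI * g) + β * (ν * T) * |w| := by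
    calc |(-ξ * i + β * (t - ν * T) * w)| ≤ |(-ξ) * i| + |β * (t - ν * T) * w| := abs_add_le _ _
      _ = ξ * |i| + β * |t - ν * T| * |w| := by
          rw [abs_mul, abs_mul, abs_mul, abs_neg, abs_of_pos hξ, abs_of_pos hβ]
      _ ≤ ξ * (LI * g) + β * (ν * T) * |w| := by
          have hiL : |i| ≤ LI * g := hi.trans (by nlinarith)
          have htb : |t - ν * T| ≤ ν * T := by
            rw [abs_of_nonpos (by nlinarith)]; nlinarith
          have hw := abs_nonneg w
          gcongr
  calc |fv| * |(-ξ * i + β * (t - ν * T) * w)|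
      ≤ |fv| * (ξ * (LI * g) + β * (ν * T) * |w|) :=
        mul_le_mul_of_nonneg_left h1 (abs_nonneg fv)
    _ = ξ * LI * (|fv| * |g|) + β * ν * T * (|fv| * |w|) := by rw [hgabs]; ring

lemma p3_ptwise {ξ B c LI a b i1 i2 i3 nw nz nx : ℝ}
    (hξ : 0 < ξ) (hB : 0 ≤ B) (hLI : 0 < LI)
    (h1 : |i1| ≤ nx * nw) (h2 : |i2| ≤ nx * nz) (h3 : |i3| ≤ nz * nw)
    (hnx : 0 ≤ nx) (hnxL : nx ≤ LI) (hnw : 0 ≤ nw) (hnz : 0 ≤ nz) :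
    |ξ * (a * i1 + b * i2) + B * (a * b + c ^ 2 * i3)|
      ≤ ξ * LI * (|a| * |nw|) + ξ * LI * (|nz| * |b|) + B * (|a| * |b|)
        + B * c ^ 2 * (|nz| * |nw|) := by
  have h1' : |i1| ≤ LI * nw := h1.trans (by nlinarith)
  have h2' : |i2| ≤ LI * nz := h2.trans (by nlinarith)
  have hnwa : |nw| = nw := abs_of_nonneg hnw
  have hnza : |nz| = nz := abs_of_nonneg hnz
  calc |ξ * (a * i1 + b * i2) + B * (a * b + c ^ 2 * i3)|
      ≤ |ξ * (a * i1 + b * i2)| + |B * (a * b + c ^ 2 * i3)| := abs_add_le _ _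
    _ = ξ * |a * i1 + b * i2| + B * |a * b + c ^ 2 * i3| := by
        rw [abs_mul, abs_mul, abs_of_pos hξ, abs_of_nonneg hB]
    _ ≤ ξ * (|a * i1| + |b * i2|) + B * (|a * b| + |c ^ 2 * i3|) := by
        gcongr <;> exact abs_add_le _ _
    _ = ξ * (|a| * |i1| + |b| * |i2|) + B * (|a| * |b| + c ^ 2 * |i3|) := by
        rw [abs_mul, abs_mul, abs_mul, abs_mul, abs_of_nonneg (sq_nonneg c)]
    _ ≤ ξ * (|a| * (LI * nw) + |b| * (LI * nz)) + B * (|a| * |b| + c ^ 2 * (nz * nw)) := by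
        have := abs_nonneg a; have := abs_nonneg b
        gcongr
    _ = ξ * LI * (|a| * |nw|) + ξ * LI * (|nz| * |b|) + B * (|a| * |b|)
        + B * c ^ 2 * (|nz| * |nw|) := by rw [hnwa, hnza]; ring

end Helpers

lemma mul_pair_le {K a b c2 d2 : ℝ} (hK : 0 ≤ K) (h1 : a ≤ c2) (h2 : b ≤ d2)
    (hb : 0 ≤ b) (hc : 0 ≤ c2) : K * (a * b) ≤ K * (c2 * d2) :=
  mul_le_mul_of_nonneg_left (mul_le_mul h1 h2 hb hc) hK

lemma abs_comb {P1 P2 P3 P4 P5 c2 c4 c5 : ℝ} (h2 : 0 ≤ c2) (h4 : 0 ≤ c4) (h5 : 0 ≤ c5) :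
    |(-P1) - c2 * P2 + P3 + c4 * P4 + c5 * P5|
      ≤ |P1| + c2 * |P2| + |P3| + c4 * |P4| + c5 * |P5| := by
  have a1 := abs_add_le ((-P1) + (-(c2 * P2)) + P3 + c4 * P4) (c5 * P5)
  have a2 := abs_add_le ((-P1) + (-(c2 * P2)) + P3) (c4 * P4)
  have a3 := abs_add_le ((-P1) + (-(c2 * P2))) P3
  have a4 := abs_add_le (-P1) (-(c2 * P2))
  have b1 : |(-P1)| = |P1| := abs_neg _
  have b2 : |(-(c2 * P2))| = c2 * |P2| := by rw [abs_neg, abs_mul, abs_of_nonneg h2]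
  have b4 : |c4 * P4| = c4 * |P4| := by rw [abs_mul, abs_of_nonneg h4]
  have b5 : |c5 * P5| = c5 * |P5| := by rw [abs_mul, abs_of_nonneg h5]
  have e : (-P1) - c2 * P2 + P3 + c4 * P4 + c5 * P5
      = (-P1) + (-(c2 * P2)) + P3 + c4 * P4 + c5 * P5 := by ring
  rw [e]
  linarith

lemma ae_sigma_fst {d : ℕ} (σ : Measure (EuclideanSpace ℝ (Fin d))) (T LI : ℝ)
    (hσL : ∀ᵐ x ∂σ, ‖x‖ ≤ LI) : ∀ᵐ p ∂(SigmaI σ T), ‖p.1‖ ≤ LI := by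
  rw [ae_iff] at hσL ⊢
  have hset : {p : EuclideanSpace ℝ (Fin d) × ℝ | ¬ ‖p.1‖ ≤ LI}
      = {x : EuclideanSpace ℝ (Fin d) | ¬ ‖x‖ ≤ LI} ×ˢ (univ : Set ℝ) := by
    ext p; simp [Set.mem_prod]
  rw [SigmaI, hset, Measure.prod_prod, hσL, zero_mul]

lemma ae_sigma_snd {d : ℕ} (σ : Measure (EuclideanSpace ℝ (Fin d))) (T : ℝ) :
    ∀ᵐ p ∂(SigmaI σ T), p.2 ∈ Ioo (0:ℝ) T := by
  rw [ae_iff]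
  have hset : {p : EuclideanSpace ℝ (Fin d) × ℝ | ¬ p.2 ∈ Ioo (0:ℝ) T}
      = (univ : Set (EuclideanSpace ℝ (Fin d))) ×ˢ ((Ioo (0:ℝ) T)ᶜ) := by
    ext p; simp [Set.mem_prod]
  rw [SigmaI, hset, Measure.prod_prod, Measure.restrict_apply (measurableSet_Ioo.compl)]
  simp


end H17

set_option maxHeartbeats 10000000 in
/-- Proposition 5.2, continuity of `F`: the linear functional `F`
satisfies `|F(v)| ≤ C_F‖(f,u₀,u₁,g_I)‖_d‖v‖_V` with the explicit constant `C_F`. -/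
theorem continuity_of_F
    {d : ℕ} (hd : 1 ≤ d)
    (Ω : Set (EuclideanSpace ℝ (Fin d))) (hΩmeas : MeasurableSet Ω)
    (σ : Measure (EuclideanSpace ℝ (Fin d)))
    (T c θ ξ β ν LI AQ AΩ : ℝ)
    (hT : 0 < T) (hc : 0 < c) (hθ : 0 < θ) (hξ : 0 < ξ) (hβ : 0 < β)
    (hAQ : 0 < AQ) (hAΩ : 0 < AΩ) (hν : 1 < ν) (hLI : 0 < LI)
    (hΩL : ∀ x ∈ Ω, ‖x‖ ≤ LI)
    (hσL : ∀ᵐ x ∂σ, ‖x‖ ≤ LI)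
    (f gI : EuclideanSpace ℝ (Fin d) → ℝ → ℝ)
    (u0 u1 : EuclideanSpace ℝ (Fin d) → ℝ)
    (hf : IntegrableOn (fun p : EuclideanSpace ℝ (Fin d) × ℝ => (f p.1 p.2) ^ 2)
      (Ω ×ˢ Ioo (0:ℝ) T))
    (hgI : Integrable (fun p : EuclideanSpace ℝ (Fin d) × ℝ => (gI p.1 p.2) ^ 2) (SigmaI σ T))
    (hu0 : IntegrableOn (fun x => (u0 x) ^ 2) Ω)
    (hu0' : IntegrableOn (fun x => ‖gradient u0 x‖ ^ 2) Ω)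
    (hu1 : IntegrableOn (fun x => (u1 x) ^ 2) Ω)
    (v : EuclideanSpace ℝ (Fin d) → ℝ → ℝ) (hv : MemW Ω σ T c v) :
    |Ffun Ω σ T c ξ β (ν * T) AQ AΩ f gI u0 u1 v|
      ≤ max (max (ξ * LI / (c * T) + β * ν + AQ) (ξ + β * ν * c * T / LI))
            (max AΩ (Real.sqrt 2 * (β * ν + ξ * LI / (c * T))))
          * Real.sqrt (datasq Ω σ T c LI f gI u0 u1)
          * Real.sqrt (Vsq Ω σ T c LI v) := by
  obtain ⟨hv1, hv2, hv3, hv4, hv5, hv6, hv7, hv8, hv9, hv10, hv11⟩ := hv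
  have hν0 : (0:ℝ) < ν := lt_trans one_pos hν
  have hQmeas : MeasurableSet (Ω ×ˢ Ioo (0:ℝ) T) := hΩmeas.prod measurableSet_Ioo
  have hβνT : (0:ℝ) ≤ β * ν * T := by positivity
  have hξLI : (0:ℝ) ≤ ξ * LI := by positivity
  -- Piece 1
  have hP1 : |∫ p in Ω ×ˢ Ioo (0:ℝ) T, f p.1 p.2 * Mop ξ β (ν * T) v p.1 p.2|
      ≤ ξ * LI * (Real.sqrt (∫ p in Ω ×ˢ Ioo (0:ℝ) T, (f p.1 p.2) ^ 2)
          * Real.sqrt (∫ p in Ω ×ˢ Ioo (0:ℝ) T, ‖sgrad v p.1 p.2‖ ^ 2))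
        + β * ν * T * (Real.sqrt (∫ p in Ω ×ˢ Ioo (0:ℝ) T, (f p.1 p.2) ^ 2)
          * Real.sqrt (∫ p in Ω ×ˢ Ioo (0:ℝ) T, (tderiv v p.1 p.2) ^ 2)) := by
    refine abs_integral_le2 hξLI hβνT hf hv3 hf hv2 ?_
    filter_upwards [ae_restrict_mem hQmeas] with p hp
    simp only [Mop]
    exact Mop_ptwise hξ hβ hT hν (abs_real_inner_le_norm _ _) (hΩL p.1 hp.1)
      (norm_nonneg _) (norm_nonneg _) hp.2.1 hp.2.2
  -- Piece 2
  have hP2 : |∫ p, gI p.1 p.2 * Mop ξ β (ν * T) v p.1 p.2 ∂(SigmaI σ T)|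
      ≤ ξ * LI * (Real.sqrt (∫ p, (gI p.1 p.2) ^ 2 ∂(SigmaI σ T))
          * Real.sqrt (∫ p, ‖sgrad v p.1 p.2‖ ^ 2 ∂(SigmaI σ T)))
        + β * ν * T * (Real.sqrt (∫ p, (gI p.1 p.2) ^ 2 ∂(SigmaI σ T))
          * Real.sqrt (∫ p, (tderiv v p.1 p.2) ^ 2 ∂(SigmaI σ T))) := by
    refine abs_integral_le2 hξLI hβνT hgI hv11 hgI hv10 ?_
    filter_upwards [ae_sigma_fst σ T LI hσL, ae_sigma_snd σ T] with p h1 h2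
    simp only [Mop]
    exact Mop_ptwise hξ hβ hT hν (abs_real_inner_le_norm _ _) h1
      (norm_nonneg _) (norm_nonneg _) h2.1 h2.2
  -- Piece 3
  have hP3 : |∫ x in Ω, (ξ * ⟪x, u1 x • sgrad v x 0 + tderiv v x 0 • gradient u0 x⟫
        + β * (ν * T) * (u1 x * tderiv v x 0 + c ^ 2 * ⟪gradient u0 x, sgrad v x 0⟫))|
      ≤ ξ * LI * (Real.sqrt (∫ x in Ω, (u1 x) ^ 2) * Real.sqrt (∫ x in Ω, ‖sgrad v x 0‖ ^ 2))
        + ξ * LI * (Real.sqrt (∫ x in Ω, ‖gradient u0 x‖ ^ 2)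
            * Real.sqrt (∫ x in Ω, (tderiv v x 0) ^ 2))
        + β * (ν * T) * (Real.sqrt (∫ x in Ω, (u1 x) ^ 2)
            * Real.sqrt (∫ x in Ω, (tderiv v x 0) ^ 2))
        + β * (ν * T) * c ^ 2 * (Real.sqrt (∫ x in Ω, ‖gradient u0 x‖ ^ 2)
            * Real.sqrt (∫ x in Ω, ‖sgrad v x 0‖ ^ 2)) := by
    have hc3 : (0:ℝ) ≤ β * (ν * T) := by positivity
    have hc4 : (0:ℝ) ≤ β * (ν * T) * c ^ 2 := by positivity
    refine abs_integral_le4 hξLI hξLI hc3 hc4 hu1 hv8 hu0' hv7 hu1 hv7 hu0' hv8 ?_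
    filter_upwards [ae_restrict_mem hΩmeas] with x hx
    rw [inner_add_right, real_inner_smul_right, real_inner_smul_right]
    exact p3_ptwise hξ (by positivity) hLI (abs_real_inner_le_norm _ _)
      (abs_real_inner_le_norm _ _) (abs_real_inner_le_norm _ _)
      (norm_nonneg _) (hΩL x hx) (norm_nonneg _) (norm_nonneg _)
  -- Piece 4
  have hP4 : |∫ p in Ω ×ˢ Ioo (0:ℝ) T, f p.1 p.2 * Wop c v p.1 p.2|
      ≤ Real.sqrt (∫ p in Ω ×ˢ Ioo (0:ℝ) T, (f p.1 p.2) ^ 2)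
        * Real.sqrt (∫ p in Ω ×ˢ Ioo (0:ℝ) T, (Wop c v p.1 p.2) ^ 2) :=
    abs_integral_le1 hf hv4 (Filter.Eventually.of_forall fun p => (abs_mul _ _).le)
  -- Piece 5
  have hP5 : |∫ x in Ω, u0 x * v x 0|
      ≤ Real.sqrt (∫ x in Ω, (u0 x) ^ 2) * Real.sqrt (∫ x in Ω, (v x 0) ^ 2) :=
    abs_integral_le1 hu0 hv9 (Filter.Eventually.of_forall fun x => (abs_mul _ _).le)
  -- triangle inequality assembling the five pieces
  have h2' := mul_le_mul_of_nonneg_left hP2 (sq_nonneg c)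
  have h4' := mul_le_mul_of_nonneg_left hP4 (by positivity : (0:ℝ) ≤ AQ * T ^ 2)
  have h5' := mul_le_mul_of_nonneg_left hP5 (by positivity : (0:ℝ) ≤ AΩ * T⁻¹)
  have htri : |Ffun Ω σ T c ξ β (ν * T) AQ AΩ f gI u0 u1 v|
      ≤ |∫ p in Ω ×ˢ Ioo (0:ℝ) T, f p.1 p.2 * Mop ξ β (ν * T) v p.1 p.2|
        + c ^ 2 * |∫ p, gI p.1 p.2 * Mop ξ β (ν * T) v p.1 p.2 ∂(SigmaI σ T)|
        + |∫ x in Ω, (ξ * ⟪x, u1 x • sgrad v x 0 + tderiv v x 0 • gradient u0 x⟫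
            + β * (ν * T) * (u1 x * tderiv v x 0 + c ^ 2 * ⟪gradient u0 x, sgrad v x 0⟫))|
        + AQ * T ^ 2 * |∫ p in Ω ×ˢ Ioo (0:ℝ) T, f p.1 p.2 * Wop c v p.1 p.2|
        + AΩ * T⁻¹ * |∫ x in Ω, u0 x * v x 0| := by
    simp only [Ffun]
    exact abs_comb (sq_nonneg c) (by positivity) (by positivity)
  -- unfold the goal
  simp only [datasq, Vsq]
  -- nonnegativity of all the integrals
  have hnf0 : (0:ℝ) ≤ ∫ p in Ω ×ˢ Ioo (0:ℝ) T, (f p.1 p.2) ^ 2 :=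
    integral_nonneg fun _ => sq_nonneg _
  have hng0 : (0:ℝ) ≤ ∫ p, (gI p.1 p.2) ^ 2 ∂(SigmaI σ T) :=
    integral_nonneg fun _ => sq_nonneg _
  have hn00 : (0:ℝ) ≤ ∫ x in Ω, (u0 x) ^ 2 := integral_nonneg fun _ => sq_nonneg _
  have hn10 : (0:ℝ) ≤ ∫ x in Ω, (u1 x) ^ 2 := integral_nonneg fun _ => sq_nonneg _
  have hnG0 : (0:ℝ) ≤ ∫ x in Ω, ‖gradient u0 x‖ ^ 2 := integral_nonneg fun _ => sq_nonneg _
  have hmd0 : (0:ℝ) ≤ ∫ p in Ω ×ˢ Ioo (0:ℝ) T, (tderiv v p.1 p.2) ^ 2 :=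
    integral_nonneg fun _ => sq_nonneg _
  have hmg0 : (0:ℝ) ≤ ∫ p in Ω ×ˢ Ioo (0:ℝ) T, ‖sgrad v p.1 p.2‖ ^ 2 :=
    integral_nonneg fun _ => sq_nonneg _
  have hmW0 : (0:ℝ) ≤ ∫ p in Ω ×ˢ Ioo (0:ℝ) T, (Wop c v p.1 p.2) ^ 2 :=
    integral_nonneg fun _ => sq_nonneg _
  have hmtd0 : (0:ℝ) ≤ ∫ x in Ω, (tderiv v x T) ^ 2 := integral_nonneg fun _ => sq_nonneg _
  have hmtg0 : (0:ℝ) ≤ ∫ x in Ω, ‖sgrad v x T‖ ^ 2 := integral_nonneg fun _ => sq_nonneg _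
  have hm0d0 : (0:ℝ) ≤ ∫ x in Ω, (tderiv v x 0) ^ 2 := integral_nonneg fun _ => sq_nonneg _
  have hm0g0 : (0:ℝ) ≤ ∫ x in Ω, ‖sgrad v x 0‖ ^ 2 := integral_nonneg fun _ => sq_nonneg _
  have hm000 : (0:ℝ) ≤ ∫ x in Ω, (v x 0) ^ 2 := integral_nonneg fun _ => sq_nonneg _
  have hmsd0 : (0:ℝ) ≤ ∫ p, (tderiv v p.1 p.2) ^ 2 ∂(SigmaI σ T) :=
    integral_nonneg fun _ => sq_nonneg _
  have hmsg0 : (0:ℝ) ≤ ∫ p, ‖sgrad v p.1 p.2‖ ^ 2 ∂(SigmaI σ T) :=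
    integral_nonneg fun _ => sq_nonneg _
  -- abbreviations
  set nf := ∫ p in Ω ×ˢ Ioo (0:ℝ) T, (f p.1 p.2) ^ 2 with hnfd
  set ng := ∫ p, (gI p.1 p.2) ^ 2 ∂(SigmaI σ T) with hngd
  set n0 := ∫ x in Ω, (u0 x) ^ 2 with hn0d
  set n1 := ∫ x in Ω, (u1 x) ^ 2 with hn1d
  set nG := ∫ x in Ω, ‖gradient u0 x‖ ^ 2 with hnGd
  set md := ∫ p in Ω ×ˢ Ioo (0:ℝ) T, (tderiv v p.1 p.2) ^ 2 with hmdd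
  set mg := ∫ p in Ω ×ˢ Ioo (0:ℝ) T, ‖sgrad v p.1 p.2‖ ^ 2 with hmgd
  set mW := ∫ p in Ω ×ˢ Ioo (0:ℝ) T, (Wop c v p.1 p.2) ^ 2 with hmWd
  set mtd := ∫ x in Ω, (tderiv v x T) ^ 2 with hmtdd
  set mtg := ∫ x in Ω, ‖sgrad v x T‖ ^ 2 with hmtgd
  set m0d := ∫ x in Ω, (tderiv v x 0) ^ 2 with hm0dd
  set m0g := ∫ x in Ω, ‖sgrad v x 0‖ ^ 2 with hm0gd
  set m00 := ∫ x in Ω, (v x 0) ^ 2 with hm00d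
  set msd := ∫ p, (tderiv v p.1 p.2) ^ 2 ∂(SigmaI σ T) with hmsdd
  set msg := ∫ p, ‖sgrad v p.1 p.2‖ ^ 2 ∂(SigmaI σ T) with hmsgd
  -- grouped quantities
  set A1 := Real.sqrt (T ^ 2 * nf) with hA1d
  set A2 := Real.sqrt (c ^ 2 * LI * ng) with hA2d
  set A3 := Real.sqrt (T * n1 + c ^ 2 * T * nG) with hA3d
  set A4 := Real.sqrt (T⁻¹ * n0) with hA4d
  set B1 := Real.sqrt (md + c ^ 2 * mg + T ^ 2 * mW) with hB1d
  set B2 := Real.sqrt (LI * msd + c ^ 2 * LI * msg) with hB2d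
  set B3 := Real.sqrt (T * m0d + c ^ 2 * T * m0g) with hB3d
  set B4 := Real.sqrt (T⁻¹ * m00) with hB4d
  have hA10 : (0:ℝ) ≤ A1 := hA1d ▸ Real.sqrt_nonneg _
  have hA20 : (0:ℝ) ≤ A2 := hA2d ▸ Real.sqrt_nonneg _
  have hA30 : (0:ℝ) ≤ A3 := hA3d ▸ Real.sqrt_nonneg _
  have hA40 : (0:ℝ) ≤ A4 := hA4d ▸ Real.sqrt_nonneg _
  have hB10 : (0:ℝ) ≤ B1 := hB1d ▸ Real.sqrt_nonneg _
  have hB20 : (0:ℝ) ≤ B2 := hB2d ▸ Real.sqrt_nonneg _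
  have hB30 : (0:ℝ) ≤ B3 := hB3d ▸ Real.sqrt_nonneg _
  have hB40 : (0:ℝ) ≤ B4 := hB4d ▸ Real.sqrt_nonneg _
  -- group 1 : the f-terms
  have hA1 : A1 = T * Real.sqrt nf := by
    rw [hA1d, Real.sqrt_mul (sq_nonneg T) nf, Real.sqrt_sq hT.le]
  have hBd : Real.sqrt md ≤ B1 := by
    rw [hB1d]
    exact Real.sqrt_le_sqrt (by linarith only [mul_nonneg (sq_nonneg c) hmg0, mul_nonneg (sq_nonneg T) hmW0])
  have hBg : c * Real.sqrt mg ≤ B1 := by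
    have e : c * Real.sqrt mg = Real.sqrt (c ^ 2 * mg) := by
      rw [Real.sqrt_mul (sq_nonneg c), Real.sqrt_sq hc.le]
    rw [hB1d, e]
    exact Real.sqrt_le_sqrt (by linarith only [hmd0, mul_nonneg (sq_nonneg T) hmW0])
  have hBW : T * Real.sqrt mW ≤ B1 := by
    have e : T * Real.sqrt mW = Real.sqrt (T ^ 2 * mW) := by
      rw [Real.sqrt_mul (sq_nonneg T), Real.sqrt_sq hT.le]
    rw [hB1d, e]
    exact Real.sqrt_le_sqrt (by linarith only [hmd0, mul_nonneg (sq_nonneg c) hmg0])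
  have hg1 : ξ * LI * (Real.sqrt nf * Real.sqrt mg) + β * ν * T * (Real.sqrt nf * Real.sqrt md)
      + AQ * T ^ 2 * (Real.sqrt nf * Real.sqrt mW)
      ≤ (ξ * LI / (c * T) + β * ν + AQ) * (A1 * B1) := by
    have t1 : ξ * LI * (Real.sqrt nf * Real.sqrt mg) ≤ ξ * LI / (c * T) * (A1 * B1) := by
      calc ξ * LI * (Real.sqrt nf * Real.sqrt mg)
          = ξ * LI / (c * T) * ((T * Real.sqrt nf) * (c * Real.sqrt mg)) := by
            field_simp
        _ ≤ ξ * LI / (c * T) * (A1 * B1) :=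
            mul_pair_le (by positivity) hA1.ge hBg (by positivity) hA10
    have t2 : β * ν * T * (Real.sqrt nf * Real.sqrt md) ≤ β * ν * (A1 * B1) := by
      calc β * ν * T * (Real.sqrt nf * Real.sqrt md)
          = β * ν * ((T * Real.sqrt nf) * Real.sqrt md) := by ring
        _ ≤ β * ν * (A1 * B1) :=
            mul_pair_le (by positivity) hA1.ge hBd (Real.sqrt_nonneg _) hA10
    have t3 : AQ * T ^ 2 * (Real.sqrt nf * Real.sqrt mW) ≤ AQ * (A1 * B1) := by
      calc AQ * T ^ 2 * (Real.sqrt nf * Real.sqrt mW)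
          = AQ * ((T * Real.sqrt nf) * (T * Real.sqrt mW)) := by ring
        _ ≤ AQ * (A1 * B1) :=
            mul_pair_le hAQ.le hA1.ge hBW (by positivity) hA10
    have e : (ξ * LI / (c * T) + β * ν + AQ) * (A1 * B1)
        = ξ * LI / (c * T) * (A1 * B1) + β * ν * (A1 * B1) + AQ * (A1 * B1) := by ring
    linarith only [t1, t2, t3, e]
  -- group 2 : the g_I terms
  have hLL : Real.sqrt LI * Real.sqrt LI = LI := Real.mul_self_sqrt hLI.le
  have hA2 : A2 = c * Real.sqrt LI * Real.sqrt ng := by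
    rw [hA2d, (show c ^ 2 * LI * ng = c ^ 2 * (LI * ng) by ring),
      Real.sqrt_mul (sq_nonneg c), Real.sqrt_sq hc.le, Real.sqrt_mul hLI.le]
    ring
  have hB2d' : Real.sqrt LI * Real.sqrt msd ≤ B2 := by
    rw [hB2d, ← Real.sqrt_mul hLI.le]
    exact Real.sqrt_le_sqrt (by linarith only [mul_nonneg (mul_nonneg (sq_nonneg c) hLI.le) hmsg0])
  have hB2g : c * (Real.sqrt LI * Real.sqrt msg) ≤ B2 := by
    have e : c * Real.sqrt (LI * msg) = Real.sqrt (c ^ 2 * (LI * msg)) := by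
      rw [Real.sqrt_mul (sq_nonneg c), Real.sqrt_sq hc.le]
    rw [hB2d, ← Real.sqrt_mul hLI.le, e]
    exact Real.sqrt_le_sqrt (by linarith only [mul_nonneg hLI.le hmsd0])
  have hg2 : c ^ 2 * (ξ * LI * (Real.sqrt ng * Real.sqrt msg)
        + β * ν * T * (Real.sqrt ng * Real.sqrt msd))
      ≤ (ξ + β * ν * c * T / LI) * (A2 * B2) := by
    have t1 : c ^ 2 * (ξ * LI * (Real.sqrt ng * Real.sqrt msg)) ≤ ξ * (A2 * B2) := by
      calc c ^ 2 * (ξ * LI * (Real.sqrt ng * Real.sqrt msg))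
          = ξ * ((c * Real.sqrt LI * Real.sqrt ng) * (c * (Real.sqrt LI * Real.sqrt msg))) := by
            linear_combination (-(c ^ 2 * ξ) * (Real.sqrt ng * Real.sqrt msg)) * hLL
        _ ≤ ξ * (A2 * B2) :=
            mul_pair_le hξ.le hA2.ge hB2g (by positivity) hA20
    have t2 : c ^ 2 * (β * ν * T * (Real.sqrt ng * Real.sqrt msd))
        ≤ (β * ν * c * T / LI) * (A2 * B2) := by
      calc c ^ 2 * (β * ν * T * (Real.sqrt ng * Real.sqrt msd))
          = (β * ν * c * T / LI) * ((c * Real.sqrt LI * Real.sqrt ng)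
              * (Real.sqrt LI * Real.sqrt msd)) := by
            have e : (c * Real.sqrt LI * Real.sqrt ng) * (Real.sqrt LI * Real.sqrt msd)
                = c * LI * (Real.sqrt ng * Real.sqrt msd) := by
              linear_combination c * (Real.sqrt ng * Real.sqrt msd) * hLL
            rw [e]
            field_simp
        _ ≤ (β * ν * c * T / LI) * (A2 * B2) :=
            mul_pair_le (by positivity) hA2.ge hB2d' (by positivity) hA20
    have e : (ξ + β * ν * c * T / LI) * (A2 * B2)
        = ξ * (A2 * B2) + (β * ν * c * T / LI) * (A2 * B2) := by ring
    have e2 : c ^ 2 * (ξ * LI * (Real.sqrt ng * Real.sqrt msg)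
          + β * ν * T * (Real.sqrt ng * Real.sqrt msd))
        = c ^ 2 * (ξ * LI * (Real.sqrt ng * Real.sqrt msg))
          + c ^ 2 * (β * ν * T * (Real.sqrt ng * Real.sqrt msd)) := by ring
    linarith only [t1, t2, e, e2]
  -- group 3 : the initial-data terms
  have hp2 : Real.sqrt n1 ^ 2 = n1 := Real.sq_sqrt hn10
  have hq2 : Real.sqrt nG ^ 2 = nG := Real.sq_sqrt hnG0
  have hr2 : Real.sqrt m0d ^ 2 = m0d := Real.sq_sqrt hm0d0
  have hs2 : Real.sqrt m0g ^ 2 = m0g := Real.sq_sqrt hm0g0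
  have hg3 : ξ * LI * (Real.sqrt n1 * Real.sqrt m0g)
        + ξ * LI * (Real.sqrt nG * Real.sqrt m0d)
        + β * (ν * T) * (Real.sqrt n1 * Real.sqrt m0d)
        + β * (ν * T) * c ^ 2 * (Real.sqrt nG * Real.sqrt m0g)
      ≤ (ξ * LI / (c * T) + β * ν) * (A3 * B3) := by
    have hA3' : A3 = Real.sqrt (T * Real.sqrt n1 ^ 2 + c ^ 2 * T * Real.sqrt nG ^ 2) := by
      rw [hp2, hq2]
    have hB3' : B3 = Real.sqrt (T * Real.sqrt m0d ^ 2 + c ^ 2 * T * Real.sqrt m0g ^ 2) := by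
      rw [hr2, hs2]
    have key1 : c * T * (Real.sqrt n1 * Real.sqrt m0g + Real.sqrt nG * Real.sqrt m0d)
        ≤ A3 * B3 := by
      rw [hA3', hB3']
      refine le_sqrt_mul_sqrt
        (mul_nonneg (mul_nonneg hc.le hT.le) (add_nonneg
          (mul_nonneg (Real.sqrt_nonneg _) (Real.sqrt_nonneg _))
          (mul_nonneg (Real.sqrt_nonneg _) (Real.sqrt_nonneg _))))
        (add_nonneg (mul_nonneg hT.le (sq_nonneg _))
          (mul_nonneg (mul_nonneg (sq_nonneg c) hT.le) (sq_nonneg _)))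
        (add_nonneg (mul_nonneg hT.le (sq_nonneg _))
          (mul_nonneg (mul_nonneg (sq_nonneg c) hT.le) (sq_nonneg _))) ?_
      nlinarith only [sq_nonneg (T * (Real.sqrt n1 * Real.sqrt m0d - c ^ 2 * Real.sqrt nG * Real.sqrt m0g))]
    have key2 : T * (Real.sqrt n1 * Real.sqrt m0d
          + c ^ 2 * (Real.sqrt nG * Real.sqrt m0g)) ≤ A3 * B3 := by
      rw [hA3', hB3']
      refine le_sqrt_mul_sqrt
        (mul_nonneg hT.le (add_nonneg
          (mul_nonneg (Real.sqrt_nonneg _) (Real.sqrt_nonneg _))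
          (mul_nonneg (sq_nonneg c) (mul_nonneg (Real.sqrt_nonneg _) (Real.sqrt_nonneg _)))))
        (add_nonneg (mul_nonneg hT.le (sq_nonneg _))
          (mul_nonneg (mul_nonneg (sq_nonneg c) hT.le) (sq_nonneg _)))
        (add_nonneg (mul_nonneg hT.le (sq_nonneg _))
          (mul_nonneg (mul_nonneg (sq_nonneg c) hT.le) (sq_nonneg _))) ?_
      nlinarith only [sq_nonneg (T * c * (Real.sqrt n1 * Real.sqrt m0g - Real.sqrt nG * Real.sqrt m0d))]
    have t1 : ξ * LI * (Real.sqrt n1 * Real.sqrt m0g)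
        + ξ * LI * (Real.sqrt nG * Real.sqrt m0d) ≤ ξ * LI / (c * T) * (A3 * B3) := by
      calc ξ * LI * (Real.sqrt n1 * Real.sqrt m0g) + ξ * LI * (Real.sqrt nG * Real.sqrt m0d)
          = ξ * LI / (c * T) * (c * T * (Real.sqrt n1 * Real.sqrt m0g
              + Real.sqrt nG * Real.sqrt m0d)) := by field_simp
        _ ≤ ξ * LI / (c * T) * (A3 * B3) :=
            mul_le_mul_of_nonneg_left key1 (by positivity)
    have t2 : β * (ν * T) * (Real.sqrt n1 * Real.sqrt m0d)
        + β * (ν * T) * c ^ 2 * (Real.sqrt nG * Real.sqrt m0g) ≤ β * ν * (A3 * B3) := by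
      calc β * (ν * T) * (Real.sqrt n1 * Real.sqrt m0d)
            + β * (ν * T) * c ^ 2 * (Real.sqrt nG * Real.sqrt m0g)
          = β * ν * (T * (Real.sqrt n1 * Real.sqrt m0d
              + c ^ 2 * (Real.sqrt nG * Real.sqrt m0g))) := by ring
        _ ≤ β * ν * (A3 * B3) := mul_le_mul_of_nonneg_left key2 (by positivity)
    have e : (ξ * LI / (c * T) + β * ν) * (A3 * B3)
        = ξ * LI / (c * T) * (A3 * B3) + β * ν * (A3 * B3) := by ring
    linarith only [t1, t2, e]
  -- group 4 : the u0 term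
  have hT'0 : (0:ℝ) ≤ T⁻¹ := by positivity
  have hTT : Real.sqrt T⁻¹ * Real.sqrt T⁻¹ = T⁻¹ := Real.mul_self_sqrt hT'0
  have hg4 : AΩ * T⁻¹ * (Real.sqrt n0 * Real.sqrt m00) = AΩ * (A4 * B4) := by
    rw [hA4d, hB4d, Real.sqrt_mul hT'0 n0, Real.sqrt_mul hT'0 m00]
    linear_combination AΩ * Real.sqrt n0 * Real.sqrt m00 * hTT.symm
  -- combine the groups
  set Cst := max (max (ξ * LI / (c * T) + β * ν + AQ) (ξ + β * ν * c * T / LI))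
      (max AΩ (Real.sqrt 2 * (β * ν + ξ * LI / (c * T)))) with hCd
  have hC1 : ξ * LI / (c * T) + β * ν + AQ ≤ Cst :=
    (le_max_left _ _).trans (le_max_left _ _)
  have hC2 : ξ + β * ν * c * T / LI ≤ Cst :=
    (le_max_right _ _).trans (le_max_left _ _)
  have hC3 : AΩ ≤ Cst := (le_max_left _ _).trans (le_max_right _ _)
  have hC4 : ξ * LI / (c * T) + β * ν ≤ Cst := by
    have h12 : (1:ℝ) ≤ Real.sqrt 2 := by
      rw [show (1:ℝ) = Real.sqrt 1 from Real.sqrt_one.symm]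
      exact Real.sqrt_le_sqrt (by norm_num)
    have hpos : (0:ℝ) ≤ β * ν + ξ * LI / (c * T) := by positivity
    have : ξ * LI / (c * T) + β * ν ≤ Real.sqrt 2 * (β * ν + ξ * LI / (c * T)) := by
      nlinarith only [h12, hpos]
    exact this.trans ((le_max_right _ _).trans (le_max_right _ _))
  have hC0 : (0:ℝ) ≤ Cst := hAΩ.le.trans hC3
  -- Cauchy–Schwarz in ℝ⁴
  have hDA : Real.sqrt (A1 ^ 2 + A2 ^ 2 + A3 ^ 2 + A4 ^ 2)
      = Real.sqrt (T ^ 2 * nf + T⁻¹ * n0 + T * n1 + c ^ 2 * T * nG + c ^ 2 * LI * ng) := by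
    rw [hA1d, hA2d, hA3d, hA4d, Real.sq_sqrt (mul_nonneg (sq_nonneg T) hnf0),
      Real.sq_sqrt (mul_nonneg (mul_nonneg (sq_nonneg c) hLI.le) hng0),
      Real.sq_sqrt (add_nonneg (mul_nonneg hT.le hn10)
        (mul_nonneg (mul_nonneg (sq_nonneg c) hT.le) hnG0)),
      Real.sq_sqrt (mul_nonneg hT'0 hn00)]
    congr 1
    ring
  have hVB : Real.sqrt (B1 ^ 2 + B2 ^ 2 + B3 ^ 2 + B4 ^ 2)
      ≤ Real.sqrt (md + c ^ 2 * mg + T ^ 2 * mW + T * mtd + c ^ 2 * T * mtg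
          + T * m0d + c ^ 2 * T * m0g + T⁻¹ * m00 + LI * msd + c ^ 2 * LI * msg) := by
    rw [hB1d, hB2d, hB3d, hB4d,
      Real.sq_sqrt (add_nonneg (add_nonneg hmd0 (mul_nonneg (sq_nonneg c) hmg0))
        (mul_nonneg (sq_nonneg T) hmW0)),
      Real.sq_sqrt (add_nonneg (mul_nonneg hLI.le hmsd0)
        (mul_nonneg (mul_nonneg (sq_nonneg c) hLI.le) hmsg0)),
      Real.sq_sqrt (add_nonneg (mul_nonneg hT.le hm0d0)
        (mul_nonneg (mul_nonneg (sq_nonneg c) hT.le) hm0g0)),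
      Real.sq_sqrt (mul_nonneg hT'0 hm000)]
    exact Real.sqrt_le_sqrt (by linarith only [mul_nonneg hT.le hmtd0, mul_nonneg (mul_nonneg (sq_nonneg c) hT.le) hmtg0])
  have key4 : A1 * B1 + A2 * B2 + A3 * B3 + A4 * B4
      ≤ Real.sqrt (T ^ 2 * nf + T⁻¹ * n0 + T * n1 + c ^ 2 * T * nG + c ^ 2 * LI * ng)
        * Real.sqrt (md + c ^ 2 * mg + T ^ 2 * mW + T * mtd + c ^ 2 * T * mtg
          + T * m0d + c ^ 2 * T * m0g + T⁻¹ * m00 + LI * msd + c ^ 2 * LI * msg) := by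
    calc A1 * B1 + A2 * B2 + A3 * B3 + A4 * B4
        ≤ Real.sqrt (A1 ^ 2 + A2 ^ 2 + A3 ^ 2 + A4 ^ 2)
          * Real.sqrt (B1 ^ 2 + B2 ^ 2 + B3 ^ 2 + B4 ^ 2) :=
          sqrt_CS4 hA10 hB10 hA20 hB20 hA30 hB30 hA40 hB40
      _ ≤ _ := by
          rw [hDA]
          exact mul_le_mul_of_nonneg_left hVB (Real.sqrt_nonneg _)
  -- final assembly
  have hs1 : (ξ * LI / (c * T) + β * ν + AQ) * (A1 * B1) ≤ Cst * (A1 * B1) :=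
    mul_le_mul_of_nonneg_right hC1 (mul_nonneg hA10 hB10)
  have hs2 : (ξ + β * ν * c * T / LI) * (A2 * B2) ≤ Cst * (A2 * B2) :=
    mul_le_mul_of_nonneg_right hC2 (mul_nonneg hA20 hB20)
  have hs3 : (ξ * LI / (c * T) + β * ν) * (A3 * B3) ≤ Cst * (A3 * B3) :=
    mul_le_mul_of_nonneg_right hC4 (mul_nonneg hA30 hB30)
  have hs4 : AΩ * (A4 * B4) ≤ Cst * (A4 * B4) :=
    mul_le_mul_of_nonneg_right hC3 (mul_nonneg hA40 hB40)
  have efold : Cst * (A1 * B1) + Cst * (A2 * B2) + Cst * (A3 * B3) + Cst * (A4 * B4)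
      = Cst * (A1 * B1 + A2 * B2 + A3 * B3 + A4 * B4) := by ring
  have hfin := mul_le_mul_of_nonneg_left key4 hC0
  have hstep2 := add_le_add (add_le_add (add_le_add (add_le_add hP1 h2') hP3) h4') h5'
  calc |Ffun Ω σ T c ξ β (ν * T) AQ AΩ f gI u0 u1 v|
      ≤ _ := htri
    _ ≤ (ξ * LI * (Real.sqrt nf * Real.sqrt mg) + β * ν * T * (Real.sqrt nf * Real.sqrt md))
        + c ^ 2 * (ξ * LI * (Real.sqrt ng * Real.sqrt msg)
            + β * ν * T * (Real.sqrt ng * Real.sqrt msd))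
        + (ξ * LI * (Real.sqrt n1 * Real.sqrt m0g)
            + ξ * LI * (Real.sqrt nG * Real.sqrt m0d)
            + β * (ν * T) * (Real.sqrt n1 * Real.sqrt m0d)
            + β * (ν * T) * c ^ 2 * (Real.sqrt nG * Real.sqrt m0g))
        + AQ * T ^ 2 * (Real.sqrt nf * Real.sqrt mW)
        + AΩ * T⁻¹ * (Real.sqrt n0 * Real.sqrt m00) := hstep2
    _ ≤ Cst * (A1 * B1 + A2 * B2 + A3 * B3 + A4 * B4) := by
        linarith only [hg1, hg2, hg3, hg4, hs1, hs2, hs3, hs4, efold]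
    _ ≤ Cst * (Real.sqrt (T ^ 2 * nf + T⁻¹ * n0 + T * n1 + c ^ 2 * T * nG + c ^ 2 * LI * ng)
        * Real.sqrt (md + c ^ 2 * mg + T ^ 2 * mW + T * mtd + c ^ 2 * T * mtg
          + T * m0d + c ^ 2 * T * m0g + T⁻¹ * m00 + LI * msd + c ^ 2 * LI * msg)) := hfin
    _ = _ := by ring
end
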